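/- arXiv:1406.5752 — 3 statements merged into one kernel-verified Lean document; each statement's English description precedes it below -/
import Mathlib

section
/- Suppose a nonnegative matrix X ∈ R_{+}^{n×p} admits a separable factorization X = F X_A where the rows of X_A (indexed by A ⊆ [n], |A| = k) are simplicial, i.e., no row of X_A is a nonnegative combination of the remaining rows of X_A, and F is nonnegative. Then A is a solution of the minimum conical hull problem: there is no subset B ⊆ [n] with |B| < |A| such that every row of X is a nonnegative combination of rows of X_B with X_B simplicial. -/
/-- The conical hull of the rows of `X` indexed by the finite set `S`. -/
def coneOf {n p : ℕ} (S : Finset (Fin n)) (X : Matrix (Fin n) (Fin p) ℝ) :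
    Set (Fin p → ℝ) :=
  {x | ∃ a : Fin n → ℝ, (∀ i, 0 ≤ a i) ∧ x = ∑ i ∈ S, a i • X i}

/-- A set of rows of `X` is simplicial if no row is a nonnegative combination of the
remaining rows. -/
def Simplicial {n p : ℕ} (X : Matrix (Fin n) (Fin p) ℝ) (S : Finset (Fin n)) : Prop :=
  ∀ i ∈ S, X i ∉ coneOf (S.erase i) X

/-!
Nonnegativity makes the cone generated by the rows pointed, and simpliciality of `A` then makes
every anchor row `X a` an extreme ray of it: in any representation of `X a` by the anchors, the
coefficient of `X a` is at least `1` and all others vanish. Hence any set `B` of rows generating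
the same cone contains a row `X b` that is a positive multiple of `X a`. Distinct anchors are not
proportional, so this choice `a ↦ b` is injective and `|A| ≤ |B|`.
-/

open Finset

variable {n p : ℕ} {X : Matrix (Fin n) (Fin p) ℝ} {A B : Finset (Fin n)}

theorem sum_smul_sum_smul {ι κ R M : Type*} [Semiring R] [AddCommMonoid M] [Module R M]
    (s : Finset ι) (t : Finset κ) (l : ι → R) (m : ι → κ → R) (v : κ → M) :
    ∑ i ∈ s, l i • ∑ k ∈ t, m i k • v k = ∑ k ∈ t, (∑ i ∈ s, l i * m i k) • v k := by
  simp only [smul_sum, smul_smul, sum_smul]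
  exact sum_comm

theorem smul_row_eq_zero_of_one_le_coeff (hX : ∀ i j, 0 ≤ X i j) {a i : Fin n} (ha : a ∈ A)
    (hi : i ∈ A) (hne : i ≠ a) {c : Fin n → ℝ} (hc : ∀ i, 0 ≤ c i)
    (hrep : X a = ∑ i ∈ A, c i • X i) (hone : 1 ≤ c a) : c i • X i = 0 := by
  funext j
  have hterm_nonneg : ∀ k, 0 ≤ c k * X k j := fun k => mul_nonneg (hc k) (hX k j)
  have hcoord : X a j = c a * X a j + ∑ k ∈ A.erase a, c k * X k j := by
    rw [← add_sum_erase A _ ha] at hrep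
    simpa [Finset.sum_apply] using congrFun hrep j
  have hrest : ∑ k ∈ A.erase a, c k * X k j ≤ 0 := by nlinarith [hX a j]
  have hle : c i * X i j ≤ ∑ k ∈ A.erase a, c k * X k j :=
    single_le_sum (fun k _ => hterm_nonneg k) (mem_erase.2 ⟨hne, hi⟩)
  exact le_antisymm (hle.trans hrest) (hterm_nonneg i)

namespace Simplicial

theorem row_ne_zero (hA : Simplicial X A) {a : Fin n} (ha : a ∈ A) : X a ≠ 0 := fun h0 =>
  hA a ha ⟨0, fun _ => le_rfl, by simp [h0]⟩

theorem one_le_coeff (hA : Simplicial X A) {a : Fin n} (ha : a ∈ A) {c : Fin n → ℝ}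
    (hc : ∀ i, 0 ≤ c i) (hrep : X a = ∑ i ∈ A, c i • X i) : 1 ≤ c a := by
  by_contra! hlt
  have hpos : 0 < 1 - c a := sub_pos.2 hlt
  have hrest : (1 - c a) • X a = ∑ i ∈ A.erase a, c i • X i := by
    rw [← add_sum_erase A _ ha] at hrep
    rw [sub_smul, one_smul, sub_eq_iff_eq_add', ← hrep]
  refine hA a ha ⟨fun i => (1 - c a)⁻¹ * c i, fun i => mul_nonneg (inv_pos.2 hpos).le (hc i), ?_⟩
  simp_rw [← smul_smul, ← smul_sum, ← hrest, smul_smul, inv_mul_cancel₀ hpos.ne', one_smul]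

theorem eq_of_smul_eq_smul (hA : Simplicial X A) {a₁ a₂ : Fin n} (ha₁ : a₁ ∈ A) (ha₂ : a₂ ∈ A)
    {t₁ t₂ : ℝ} (ht₁ : 0 < t₁) (ht₂ : 0 ≤ t₂) (h : t₁ • X a₁ = t₂ • X a₂) : a₁ = a₂ := by
  by_contra hne
  refine hA a₁ ha₁ ⟨Pi.single a₂ (t₂ / t₁), fun i => ?_, ?_⟩
  · rcases eq_or_ne i a₂ with rfl | hi
    · simpa using div_nonneg ht₂ ht₁.le
    · simp [hi]
  · rw [sum_eq_single_of_mem a₂ (mem_erase.2 ⟨Ne.symm hne, ha₂⟩)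
      fun i _ hi => by simp [hi]]
    rw [Pi.single_eq_same, div_eq_inv_mul, ← smul_smul, ← h, smul_smul,
      inv_mul_cancel₀ ht₁.ne', one_smul]

theorem coeff_eq_zero (hX : ∀ i j, 0 ≤ X i j) (hA : Simplicial X A) {a i : Fin n}
    (ha : a ∈ A) (hi : i ∈ A) (hne : i ≠ a) {c : Fin n → ℝ} (hc : ∀ i, 0 ≤ c i)
    (hrep : X a = ∑ i ∈ A, c i • X i) : c i = 0 :=
  (smul_eq_zero.1 (smul_row_eq_zero_of_one_le_coeff hX ha hi hne hc hrep
    (hA.one_le_coeff ha hc hrep))).resolve_right (hA.row_ne_zero hi)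

theorem exists_row_eq_smul (hX : ∀ i j, 0 ≤ X i j) (hA : Simplicial X A)
    (hBA : ∀ b ∈ B, X b ∈ coneOf A X) {a : Fin n} (ha : a ∈ A) (haB : X a ∈ coneOf B X) :
    ∃ b ∈ B, ∃ t : ℝ, 0 < t ∧ X b = t • X a := by
  obtain ⟨l, hl, hla⟩ := haB
  choose! m hm hmb using hBA
  set c : Fin n → ℝ := fun i => ∑ b ∈ B, l b * m b i
  have hc : ∀ i, 0 ≤ c i := fun i => sum_nonneg fun b hb => mul_nonneg (hl b) (hm b hb i)
  have hrep : X a = ∑ i ∈ A, c i • X i := by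
    rw [hla, sum_congr rfl fun b hb => by rw [hmb b hb]]
    exact sum_smul_sum_smul B A l m X
  obtain ⟨b, hb, hpos⟩ : ∃ b ∈ B, 0 < l b * m b a := by
    by_contra! h
    linarith [sum_nonpos h, hA.one_le_coeff ha hc hrep]
  have hlb : 0 < l b := pos_of_mul_pos_left hpos (hm b hb a)
  -- `l b * m b i` is one of the summands of `c i = 0`.
  have hm_zero : ∀ i ∈ A, i ≠ a → m b i = 0 := fun i hi hne =>
    have hle : l b * m b i ≤ c i :=
      single_le_sum (f := fun b => l b * m b i) (fun b hb => mul_nonneg (hl b) (hm b hb i)) hb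
    (mul_eq_zero.1 (le_antisymm (hle.trans (hA.coeff_eq_zero hX ha hi hne hc hrep).le)
      (mul_nonneg (hl b) (hm b hb i)))).resolve_left hlb.ne'
  refine ⟨b, hb, m b a, pos_of_mul_pos_right hpos (hl b), ?_⟩
  rw [hmb b hb, sum_eq_single_of_mem a ha fun i hi hne => by rw [hm_zero i hi hne, zero_smul]]

theorem card_le_of_mutual_coneOf (hX : ∀ i j, 0 ≤ X i j) (hA : Simplicial X A)
    (hBA : ∀ b ∈ B, X b ∈ coneOf A X) (hAB : ∀ a ∈ A, X a ∈ coneOf B X) : #A ≤ #B := by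
  choose! f hfB t ht hft using fun a ha => hA.exists_row_eq_smul hX hBA ha (hAB a ha)
  refine card_le_card_of_injOn f hfB fun a₁ ha₁ a₂ ha₂ hf => ?_
  exact hA.eq_of_smul_eq_smul ha₁ ha₂ (ht a₁ ha₁) (ht a₂ ha₂).le
    (by rw [← hft a₁ ha₁, ← hft a₂ ha₂, hf])

end Simplicial

/-- If a nonnegative `X` admits a separable factorization with simplicial anchor rows
`X_A`, then `A` solves the minimum conical hull problem: no strictly smaller simplicial
subset `B` has all rows of `X` as nonnegative combinations of its rows. -/
theorem simplicial_separable_factorization_is_minimum_conical_hull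
    {n p : ℕ} (X : Matrix (Fin n) (Fin p) ℝ) (hX : ∀ i j, 0 ≤ X i j)
    (A : Finset (Fin n)) (hA : Simplicial X A)
    (hcov : ∀ r : Fin n, X r ∈ coneOf A X) :
    ¬ ∃ B : Finset (Fin n), B.card < A.card ∧ Simplicial X B ∧
        ∀ r : Fin n, X r ∈ coneOf B X := by
  rintro ⟨B, hlt, -, hB⟩
  exact hlt.not_ge (hA.card_le_of_mutual_coneOf hX (fun b _ => hcov b) fun a _ => hB a)
end

section
/- Let O_i ∈ R^{p_i×k} and O_j ∈ R^{p_j×k} have full column rank k, and let a, b ∈ R^k be entrywise nonzero vectors with all ratios b_s/a_s distinct. Suppose X_1 = O_i Diag(a) O_j^T and X_2 = O_i Diag(b) O_j^T. If also Õ_i Diag(a) Õ_j^T = X_1 and Õ_i Diag(b) Õ_j^T = X_2 for matrices Õ_i, Õ_j of the same shapes with full column rank, then for each s ∈ [k] there exist t ∈ [k] and a nonzero scalar δ such that Õ_i^t = δ O_i^s and Õ_j^t = O_j^s/δ. Consequently the set of rank-one matrices {O_i^s ⊗ O_j^s}_{s∈[k]} is uniquely determined by X_1 and X_2. -/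
/-!
Since `Õⱼ` has full column rank, `Diag(a) Õⱼᵀ` has a right inverse, so the first moment
equation forces `Õᵢ = Oᵢ P` for a square matrix `P`. Cancelling `Oᵢ` and `Diag(a) Õⱼᵀ` in the
two moment equations shows that `P` commutes with `Diag(b / a)`; the ratios being distinct, `P`
is diagonal, and comparing the first moments again gives `Oⱼ = Õⱼ P`.
-/

open Matrix

namespace Matrix

variable {ι m n : Type*} [Fintype ι]

theorem mul_right_injective_of_injective_mulVec {R o : Type*} [NonUnitalSemiring R]
    {A : Matrix m ι R} (hA : Function.Injective A.mulVec) :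
    Function.Injective (A * · : Matrix ι o R → Matrix m o R) := by
  cases isEmpty_or_nonempty o
  · exact Function.injective_of_subsingleton _
  · exact mul_right_injective_iff_mulVec_injective.mpr hA

theorem exists_mul_eq_one_of_injective_mulVec {K : Type*} [Field K] [DecidableEq ι] [Fintype m]
    {A : Matrix m ι K} (hA : Function.Injective A.mulVec) : ∃ L : Matrix ι m K, L * A = 1 := by
  classical
  obtain ⟨f, hf⟩ := A.mulVecLin.exists_leftInverse_of_injective (LinearMap.ker_eq_bot.mpr hA)
  refine ⟨LinearMap.toMatrix' f, ?_⟩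
  rw [← LinearMap.toMatrix'_toLin' A, ← LinearMap.toMatrix'_comp, Matrix.toLin'_apply', hf,
    LinearMap.toMatrix'_id]

theorem isUnit_of_injective_mulVec_mul {K : Type*} [Field K] [DecidableEq ι] {A : Matrix m ι K}
    {B : Matrix ι ι K} (h : Function.Injective (A * B).mulVec) : IsUnit B := by
  rw [← mulVec_injective_iff_isUnit]
  refine Function.Injective.of_comp (f := A.mulVec) ?_
  convert h using 1
  funext v
  exact mulVec_mulVec v A B

theorem eq_diagonal_diag_of_commute_diagonal {R : Type*} [CommRing R] [NoZeroDivisors R]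
    [DecidableEq ι] {c : ι → R} (hc : Function.Injective c) {P : Matrix ι ι R}
    (h : Commute (diagonal c) P) : P = diagonal P.diag := by
  ext s t
  obtain rfl | hst := eq_or_ne s t
  · simp
  · have hentry := congrFun (congrFun h.eq s) t
    rw [diagonal_mul, mul_diagonal] at hentry
    have : (c s - c t) * P s t = 0 := by rw [sub_mul, hentry, mul_comm, sub_self]
    rw [diagonal_apply_ne _ hst]
    exact (mul_eq_zero.mp this).resolve_left (sub_ne_zero.mpr (hc.ne hst))

theorem exists_commute_diagonal_of_two_moments {K : Type*} [Field K] [DecidableEq ι] [Fintype m]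
    [Fintype n] {Oi Oi' : Matrix m ι K} {Oj Oj' : Matrix n ι K}
    (hOi : Function.Injective Oi.mulVec) (hOj' : Function.Injective Oj'.mulVec)
    {a b : ι → K} (ha : ∀ s, a s ≠ 0)
    (h1 : Oi' * diagonal a * Oj'ᵀ = Oi * diagonal a * Ojᵀ)
    (h2 : Oi' * diagonal b * Oj'ᵀ = Oi * diagonal b * Ojᵀ) :
    ∃ P : Matrix ι ι K, Oi' = Oi * P ∧ P * (diagonal a * Oj'ᵀ) = diagonal a * Ojᵀ ∧
      Commute (diagonal (b / a)) P := by
  obtain ⟨Lj', hLj'⟩ := exists_mul_eq_one_of_injective_mulVec hOj'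
  set G := diagonal a * Oj'ᵀ
  set R := Lj'ᵀ * diagonal a⁻¹
  have hGR : G * R = 1 := by
    simp only [G, R, Matrix.mul_assoc, ← Matrix.mul_assoc Oj'ᵀ, ← transpose_mul, hLj',
      transpose_one, Matrix.one_mul, diagonal_mul_diagonal]
    simp [ha]
  have cancel_right : ∀ X Y : Matrix ι ι K, X * G = Y * G → X = Y := fun X Y h => by
    simpa only [Matrix.mul_assoc, hGR, Matrix.mul_one] using congrArg (· * R) h
  set P := diagonal a * Ojᵀ * R
  have hP : Oi' = Oi * P := by
    calc Oi' = Oi' * (G * R) := by rw [hGR, Matrix.mul_one]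
      _ = Oi * P := by simp only [G, P, ← Matrix.mul_assoc, h1]
  have hPG : P * G = diagonal a * Ojᵀ :=
    mul_right_injective_of_injective_mulVec hOi (by simp only [G, ← Matrix.mul_assoc, ← hP, h1])
  have hb : diagonal b = diagonal (b / a) * diagonal a := by
    rw [diagonal_mul_diagonal]
    congr 1
    ext s
    simp [ha s]
  refine ⟨P, hP, hPG, (cancel_right _ _ (mul_right_injective_of_injective_mulVec hOi ?_)).symm⟩
  calc Oi * (P * diagonal (b / a) * G) = Oi' * diagonal b * Oj'ᵀ := by
        simp only [G, hb, hP, Matrix.mul_assoc]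
    _ = Oi * diagonal b * Ojᵀ := h2
    _ = Oi * (diagonal (b / a) * P * G) := by simp only [hb, Matrix.mul_assoc, hPG]

theorem exists_diagonal_of_two_moments {K : Type*} [Field K] [DecidableEq ι] [Fintype m]
    [Fintype n] {Oi Oi' : Matrix m ι K} {Oj Oj' : Matrix n ι K}
    (hOi : Function.Injective Oi.mulVec) (hOj : Function.Injective Oj.mulVec)
    (hOj' : Function.Injective Oj'.mulVec)
    {a b : ι → K} (ha : ∀ s, a s ≠ 0) (hba : Function.Injective (b / a))
    (h1 : Oi' * diagonal a * Oj'ᵀ = Oi * diagonal a * Ojᵀ)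
    (h2 : Oi' * diagonal b * Oj'ᵀ = Oi * diagonal b * Ojᵀ) :
    ∃ d : ι → K, (∀ s, d s ≠ 0) ∧ Oi' = Oi * diagonal d ∧ Oj = Oj' * diagonal d := by
  obtain ⟨P, hP, hPG, hcomm⟩ := exists_commute_diagonal_of_two_moments hOi hOj' ha h1 h2
  obtain ⟨d, rfl⟩ : ∃ d, P = diagonal d := ⟨_, eq_diagonal_diag_of_commute_diagonal hba hcomm⟩
  have hDa : IsUnit (diagonal a) := isUnit_diagonal.mpr (Pi.isUnit_iff.mpr fun s => (ha s).isUnit)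
  have hOj_eq : Oj = Oj' * diagonal d := by
    have hOj_transpose : diagonal a * Ojᵀ = diagonal a * (diagonal d * Oj'ᵀ) := by
      rw [← hPG, ← Matrix.mul_assoc, (commute_diagonal d a).eq, Matrix.mul_assoc]
    rw [← transpose_transpose Oj,
      mul_right_injective_of_injective_mulVec (mulVec_injective_of_isUnit hDa) hOj_transpose,
      transpose_mul, transpose_transpose, diagonal_transpose]
  have hd : IsUnit d := isUnit_diagonal.mp (isUnit_of_injective_mulVec_mul (hOj_eq ▸ hOj))
  exact ⟨d, fun s => (Pi.isUnit_iff.mp hd s).ne_zero, hP, hOj_eq⟩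

end Matrix

theorem identifiability_two_moments_general
    {pi pj k : ℕ}
    (Oi : Matrix (Fin pi) (Fin k) ℝ) (Oj : Matrix (Fin pj) (Fin k) ℝ)
    (Oi' : Matrix (Fin pi) (Fin k) ℝ) (Oj' : Matrix (Fin pj) (Fin k) ℝ)
    (hOi : ∀ v : Fin k → ℝ, Oi.mulVec v = 0 → v = 0)
    (hOj : ∀ v : Fin k → ℝ, Oj.mulVec v = 0 → v = 0)
    (hOj' : ∀ v : Fin k → ℝ, Oj'.mulVec v = 0 → v = 0)
    (a b : Fin k → ℝ) (ha : ∀ s, a s ≠ 0)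
    (hratio : ∀ s t, s ≠ t → b s / a s ≠ b t / a t)
    (h1 : Oi' * diagonal a * Oj'ᵀ = Oi * diagonal a * Ojᵀ)
    (h2 : Oi' * diagonal b * Oj'ᵀ = Oi * diagonal b * Ojᵀ) :
    (∀ s : Fin k, ∃ t : Fin k, ∃ δ : ℝ, δ ≠ 0 ∧
        (∀ r, Oi' r t = δ * Oi r s) ∧ (∀ r, Oj' r t = Oj r s / δ)) ∧
      {M : Matrix (Fin pi) (Fin pj) ℝ |
          ∃ s : Fin k, M = fun r c => Oi r s * Oj c s} =
        {M : Matrix (Fin pi) (Fin pj) ℝ |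
          ∃ s : Fin k, M = fun r c => Oi' r s * Oj' c s} := by
  have inj {p : ℕ} {A : Matrix (Fin p) (Fin k) ℝ} (hA : ∀ v, A.mulVec v = 0 → v = 0) :
      Function.Injective A.mulVec :=
    LinearMap.ker_eq_bot.mp (LinearMap.ker_eq_bot'.mpr hA : LinearMap.ker A.mulVecLin = ⊥)
  obtain ⟨d, hd, hOi', hOj⟩ := exists_diagonal_of_two_moments (inj hOi) (inj hOj) (inj hOj') ha
    (fun s t hst => by_contra (hratio s t · hst)) h1 h2
  have hcol_i (r s) : Oi' r s = d s * Oi r s := by rw [hOi', mul_diagonal, mul_comm]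
  have hcol_j (r s) : Oj r s = Oj' r s * d s := by rw [hOj, mul_diagonal]
  refine ⟨fun s => ⟨s, d s, hd s, fun r => hcol_i r s, fun r => ?_⟩, ?_⟩
  · rw [hcol_j, mul_div_cancel_right₀ _ (hd s)]
  · have hrank_one (s) : (fun r c => Oi r s * Oj c s) = fun r c => Oi' r s * Oj' c s := by
      funext r c
      rw [hcol_i, hcol_j]
      ring
    simp_rw [hrank_one]

/-- Identifiability: two mixture moments `X₁ = Oᵢ Diag(a) Oⱼᵀ` and
`X₂ = Oᵢ Diag(b) Oⱼᵀ` with distinct ratios `b_s/a_s` determine the columns of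
`Oᵢ, Oⱼ` up to matching and reciprocal scaling; hence the rank-one components
`Oᵢ^s ⊗ Oⱼ^s` are uniquely determined. -/
theorem identifiability_two_moments
    {pi pj k : ℕ}
    (Oi : Matrix (Fin pi) (Fin k) ℝ) (Oj : Matrix (Fin pj) (Fin k) ℝ)
    (Oi' : Matrix (Fin pi) (Fin k) ℝ) (Oj' : Matrix (Fin pj) (Fin k) ℝ)
    (hOi : ∀ v : Fin k → ℝ, Oi.mulVec v = 0 → v = 0)
    (hOj : ∀ v : Fin k → ℝ, Oj.mulVec v = 0 → v = 0)
    (hOi' : ∀ v : Fin k → ℝ, Oi'.mulVec v = 0 → v = 0)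
    (hOj' : ∀ v : Fin k → ℝ, Oj'.mulVec v = 0 → v = 0)
    (a b : Fin k → ℝ) (ha : ∀ s, a s ≠ 0) (hb : ∀ s, b s ≠ 0)
    (hratio : ∀ s t, s ≠ t → b s / a s ≠ b t / a t)
    (h1 : Oi' * diagonal a * Oj'ᵀ = Oi * diagonal a * Ojᵀ)
    (h2 : Oi' * diagonal b * Oj'ᵀ = Oi * diagonal b * Ojᵀ) :
    (∀ s : Fin k, ∃ t : Fin k, ∃ δ : ℝ, δ ≠ 0 ∧
        (∀ r, Oi' r t = δ * Oi r s) ∧ (∀ r, Oj' r t = Oj r s / δ)) ∧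
      {M : Matrix (Fin pi) (Fin pj) ℝ |
          ∃ s : Fin k, M = fun r c => Oi r s * Oj c s} =
        {M : Matrix (Fin pi) (Fin pj) ℝ |
          ∃ s : Fin k, M = fun r c => Oi' r s * Oj' c s} :=
  identifiability_two_moments_general Oi Oj Oi' Oj' hOi hOj hOj' a b ha hratio h1 h2
end

section
/- Let Q_{i,j} = p(w_1=i, w_2=j) be a joint distribution of two words generated by an LDA-type model with topic variable z: p(w_2=j | w_1=i) = ∑_{t=1}^k p(z_1=t | w_1=i) p(w_2=j | z_1=t), and suppose for each topic t there is an anchor word v_t with p(z_1=t | w_1=v_t) = 1. Then for all i, j: Q_{i,j} = ∑_{t=1}^k (p(w_1=i | z_1=t) / p(w_1=v_t | z_1=t)) · Q_{v_t, j}. -/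
/-- Joint probability of the word pair `(w₁=i, w₂=j)` (`Q` matrix),
from the joint distribution `J` over `(w₁, w₂, z₁)`. -/
def Q {W Z : Type*} [Fintype Z] (J : W → W → Z → ℝ) (i j : W) : ℝ := ∑ t, J i j t

/-- Marginal probability `p(w₁ = i)`. -/
def pW1 {W Z : Type*} [Fintype W] [Fintype Z] (J : W → W → Z → ℝ) (i : W) : ℝ :=
  ∑ j, ∑ t, J i j t

/-- Marginal probability `p(z₁ = t)`. -/
def pZ {W Z : Type*} [Fintype W] (J : W → W → Z → ℝ) (t : Z) : ℝ :=
  ∑ i, ∑ j, J i j t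

/-- Joint probability `p(w₁ = i, z₁ = t)`. -/
def pW1Z {W Z : Type*} [Fintype W] (J : W → W → Z → ℝ) (i : W) (t : Z) : ℝ :=
  ∑ j, J i j t

/-- Joint probability `p(w₂ = j, z₁ = t)`. -/
def pW2Z {W Z : Type*} [Fintype W] (J : W → W → Z → ℝ) (j : W) (t : Z) : ℝ :=
  ∑ i, J i j t

/-!
An anchor word `v_t` puts all of its mass `p(w₁ = v_t)` on topic `t`, so its co-occurrence row is
the single term `Q_{v_t, j} = p(w₁ = v_t, w₂ = j, z₁ = t)`. Conditional independence of `w₁` and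
`w₂` given `z₁` makes `p(w₁ = i, w₂ = j, z₁ = t)` proportional in `i` to `p(w₁ = i, z₁ = t)`, hence
equal to `p(w₁ = i, z₁ = t) / p(w₁ = v_t, z₁ = t) · Q_{v_t, j}`; summing over `t` gives `Q_{i, j}`.
-/

open Finset

theorem Fintype.eq_zero_of_sum_eq_apply {ι M : Type*} [Fintype ι] [AddCommGroup M] [PartialOrder M]
    [IsOrderedAddMonoid M] {f : ι → M} (hf : ∀ i, 0 ≤ f i) {t s : ι} (h : ∑ i, f i = f t)
    (hs : s ≠ t) : f s = 0 := by
  classical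
  have hcompl : ∑ i ∈ {t}ᶜ, f i = 0 := by
    have hsplit := Fintype.sum_eq_add_sum_compl t f
    rw [h] at hsplit
    exact add_eq_left.mp hsplit.symm
  exact (Finset.sum_eq_zero_iff_of_nonneg fun i _ => hf i).mp hcompl s (by simpa using hs)

theorem ne_zero_and_eq_of_div_eq_one {G₀ : Type*} [GroupWithZero G₀] {a b : G₀} (h : a / b = 1) :
    b ≠ 0 ∧ a = b := by
  have hb : b ≠ 0 := by
    rintro rfl
    simp at h
  exact ⟨hb, (div_eq_one_iff_eq hb).mp h⟩

section Anchor

variable {W Z : Type*} [Fintype W] {J : W → W → Z → ℝ}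

theorem pW1_eq_sum_pW1Z [Fintype Z] (J : W → W → Z → ℝ) (i : W) : pW1 J i = ∑ t, pW1Z J i t :=
  Finset.sum_comm

theorem pW1Z_eq_zero_of_anchor [Fintype Z] (hJ : ∀ i j t, 0 ≤ J i j t) {w : W} {t s : Z}
    (hanchor : pW1Z J w t = pW1 J w) (hs : s ≠ t) : pW1Z J w s = 0 :=
  Fintype.eq_zero_of_sum_eq_apply (fun u => sum_nonneg fun j _ => hJ w j u)
    ((pW1_eq_sum_pW1Z J w).symm.trans hanchor.symm) hs

theorem Q_eq_of_anchor [Fintype Z] (hJ : ∀ i j t, 0 ≤ J i j t) {w : W} {t : Z}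
    (hanchor : pW1Z J w t = pW1 J w) (j : W) : Q J w j = J w j t := by
  refine sum_eq_single_of_mem t (mem_univ t) fun s _ hs => le_antisymm ?_ (hJ w j s)
  calc J w j s ≤ pW1Z J w s := single_le_sum (fun j _ => hJ w j s) (mem_univ j)
    _ = 0 := pW1Z_eq_zero_of_anchor hJ hanchor hs

theorem mul_pW1Z_eq_pW1Z_mul_of_condIndep
    (hCI : ∀ i j t, J i j t * pZ J t = pW1Z J i t * pW2Z J j t) {t : Z} (hZ : pZ J t ≠ 0)
    (i w j : W) : J i j t * pW1Z J w t = pW1Z J i t * J w j t := by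
  apply mul_right_cancel₀ hZ
  linear_combination pW1Z J w t * hCI i j t - pW1Z J i t * hCI w j t

end Anchor

theorem lda_anchor_word_conical_hull_general
    {W Z : Type*} [Fintype W] [Fintype Z]
    (J : W → W → Z → ℝ)
    (hJ : ∀ i j t, 0 ≤ J i j t)
    (hCI : ∀ i j t, J i j t * pZ J t = pW1Z J i t * pW2Z J j t)
    (hposZ : ∀ t, 0 < pZ J t)
    (v : Z → W)
    (hanchor : ∀ t, pW1Z J (v t) t / pW1 J (v t) = 1) :
    ∀ i j, Q J i j =
      ∑ t, ((pW1Z J i t / pZ J t) / (pW1Z J (v t) t / pZ J t)) * Q J (v t) j := by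
  intro i j
  refine sum_congr rfl fun t _ => ?_
  obtain ⟨hv_ne, hvt⟩ := ne_zero_and_eq_of_div_eq_one (hanchor t)
  rw [div_div_div_cancel_right₀ (hposZ t).ne', Q_eq_of_anchor hJ hvt, div_mul_eq_mul_div,
    eq_div_iff (hvt ▸ hv_ne)]
  exact mul_pW1Z_eq_pW1Z_mul_of_condIndep hCI (hposZ t).ne' i (v t) j

/-- Anchor-word identity for LDA: with an anchor word `v t` for each topic `t`
(`p(z₁=t | w₁=v t) = 1`), the word co-occurrence matrix satisfies
`Q_{ij} = ∑_t (p(w₁=i|z₁=t)/p(w₁=v_t|z₁=t)) · Q_{v_t, j}`. -/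
theorem lda_anchor_word_conical_hull
    {W Z : Type*} [Fintype W] [Fintype Z]
    (J : W → W → Z → ℝ)
    (hJ : ∀ i j t, 0 ≤ J i j t)
    (hsum : ∑ i, ∑ j, ∑ t, J i j t = 1)
    (hCI : ∀ i j t, J i j t * pZ J t = pW1Z J i t * pW2Z J j t)
    (hposW : ∀ i, 0 < pW1 J i) (hposZ : ∀ t, 0 < pZ J t)
    (v : Z → W)
    (hanchor : ∀ t, pW1Z J (v t) t / pW1 J (v t) = 1) :
    ∀ i j, Q J i j =
      ∑ t, ((pW1Z J i t / pZ J t) / (pW1Z J (v t) t / pZ J t)) * Q J (v t) j :=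
  lda_anchor_word_conical_hull_general J hJ hCI hposZ v hanchor
end
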